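/- If G is a finite group that is not an NCI^{(2)}-group and H is any finite group, then G × H is not an NCI^{(2)}-group. -/

import Mathlib

/-- The right regular representation `G →* Sym(G)`, `g ↦ (x ↦ x * g)`
(made a homomorphism w.r.t. the permutation product `(f*g) x = f (g x)`). -/
def rightRegHom (G : Type*) [Group G] : G →* Equiv.Perm G where
  toFun g := Equiv.mulRight g⁻¹
  map_one' := by ext x; simp
  map_mul' a b := by ext x; simp [mul_assoc]

/-- The group of right translations `G_r ≤ Sym(G)`. -/
def rightReg (G : Type*) [Group G] : Subgroup (Equiv.Perm G) :=
  (rightRegHom G).range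

/-- A subgroup of `Sym(α)` is regular if it acts simply transitively. -/
def IsRegularPermSubgroup {α : Type*} (R : Subgroup (Equiv.Perm α)) : Prop :=
  ∀ x y : α, ∃! r : R, (r : Equiv.Perm α) x = y

/-- A `G`-regular subgroup of `Sym(G)`: a regular subgroup isomorphic to `G`. -/
def IsGRegular (G : Type*) [Group G] (R : Subgroup (Equiv.Perm G)) : Prop :=
  IsRegularPermSubgroup R ∧ Nonempty (R ≃* G)

/-- The holomorph `Hol(G) = G_r ⋊ Aut(G)` as a subgroup of `Sym(G)`. -/
def hol (G : Type*) [Group G] : Subgroup (Equiv.Perm G) where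
  carrier := {f : Equiv.Perm G | ∃ σ : MulAut G, ∃ a : G, ∀ g : G, f g = σ g * a}
  one_mem' := ⟨1, 1, fun g => by simp⟩
  mul_mem' := by
    rintro f f' ⟨σ, a, hf⟩ ⟨σ', a', hpair⟩
    refine ⟨σ * σ', σ a' * a, fun g => ?_⟩
    rw [Equiv.Perm.mul_apply, hpair g, hf, map_mul]
    simp [mul_assoc]
  inv_mem' := by
    rintro f ⟨σ, a, hf⟩
    refine ⟨σ⁻¹, σ⁻¹ (a⁻¹), fun g => f.injective ?_⟩
    rw [(show ∀ (e : Equiv.Perm G) (x : G), e (e⁻¹ x) = x from fun e x => e.apply_symm_apply x), hf, ← map_mul]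
    simp

/-- The 2-closure of a permutation group: all permutations preserving each
orbit of the componentwise action on ordered pairs. -/
def twoClosure {α : Type*} (K : Subgroup (Equiv.Perm α)) : Subgroup (Equiv.Perm α) where
  carrier := {f : Equiv.Perm α | ∀ x y : α, ∃ k ∈ K, f x = k x ∧ f y = k y}
  one_mem' := fun x y => ⟨1, K.one_mem, rfl, rfl⟩
  mul_mem' := by
    intro f g hf hg x y
    obtain ⟨k, hk, hk1, hk2⟩ := hg x y
    obtain ⟨k', hk', h1, h2⟩ := hf (g x) (g y)
    refine ⟨k' * k, mul_mem hk' hk, ?_, ?_⟩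
    · rw [Equiv.Perm.mul_apply, Equiv.Perm.mul_apply, h1, hk1]
    · rw [Equiv.Perm.mul_apply, Equiv.Perm.mul_apply, h2, hk2]
  inv_mem' := by
    intro f hf x y
    obtain ⟨k, hk, h1, h2⟩ := hf (f⁻¹ x) (f⁻¹ y)
    refine ⟨k⁻¹, inv_mem hk, k.injective ?_, k.injective ?_⟩
    · rw [(show ∀ (e : Equiv.Perm α) (x : α), e (e⁻¹ x) = x from fun e x => e.apply_symm_apply x), ← h1, (show ∀ (e : Equiv.Perm α) (x : α), e (e⁻¹ x) = x from fun e x => e.apply_symm_apply x)]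
    · rw [(show ∀ (e : Equiv.Perm α) (x : α), e (e⁻¹ x) = x from fun e x => e.apply_symm_apply x), ← h2, (show ∀ (e : Equiv.Perm α) (x : α), e (e⁻¹ x) = x from fun e x => e.apply_symm_apply x)]

/-- A permutation group `K` with `G_r ≤ K` is `G`-transjugate if every
`G`-regular subgroup of `K` is conjugate in `K` to `G_r`. -/
def IsTransjugate (G : Type*) [Group G] (K : Subgroup (Equiv.Perm G)) : Prop :=
  ∀ R : Subgroup (Equiv.Perm G), R ≤ K → IsGRegular G R →
    ∃ k ∈ K, Subgroup.map (MulAut.conj k).toMonoidHom R = rightReg G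

/-- `G` is an `NCI⁽²⁾`-group: every 2-closed subgroup of `Sym(G)` between
`G_r` and `Hol(G)` is `G`-transjugate. -/
def IsNCI2 (G : Type*) [Group G] : Prop :=
  ∀ K : Subgroup (Equiv.Perm G), rightReg G ≤ K → K ≤ hol G →
    twoClosure K = K → IsTransjugate G K

/-- The natural embedding `Sym(α) × Sym(β) →* Sym(α × β)`. -/
def prodPermHom (α β : Type*) : Equiv.Perm α × Equiv.Perm β →* Equiv.Perm (α × β) where
  toFun p := Equiv.prodCongr p.1 p.2
  map_one' := by ext x <;> simp
  map_mul' p q := by ext x <;> simp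

/-! Given `K ≤ Sym(G)` witnessing that `G` is not `NCI⁽²⁾`, with a `G`-regular `R ≤ K` not
conjugate in `K` to `G_r`, the group `K × H_r ≤ Sym(G × H)` witnesses the same for `G × H`:
it lies between `(G × H)_r = G_r × H_r` and `Hol(G) × Hol(H) ≤ Hol(G × H)`, products of 2-closed
groups are 2-closed, `R × H_r` is `(G × H)`-regular, and conjugation by `(k, l)` acts
componentwise, so a conjugator of `R × H_r` onto `G_r × H_r` would yield one of `R` onto `G_r`. -/

open Equiv

theorem Equiv.Perm.exists_prodCongr_eq {α β : Type*} [Nonempty α] [Nonempty β]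
    {f : Perm (α × β)} (hfst : ∀ p q : α × β, p.1 = q.1 → (f p).1 = (f q).1)
    (hsnd : ∀ p q : α × β, p.2 = q.2 → (f p).2 = (f q).2) :
    ∃ (g : Perm α) (e : Perm β), prodCongr g e = f := by
  obtain ⟨a₀⟩ := ‹Nonempty α›
  obtain ⟨b₀⟩ := ‹Nonempty β›
  have hg : Function.Bijective fun x => (f (x, b₀)).1 := by
    refine ⟨fun x x' hxx' => ?_, fun y => ⟨(f.symm (y, b₀)).1, ?_⟩⟩
    · exact congrArg Prod.fst (f.injective (Prod.ext hxx' (hsnd _ _ rfl)))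
    · exact (hfst ((f.symm (y, b₀)).1, b₀) (f.symm (y, b₀)) rfl).trans
        (by rw [f.apply_symm_apply])
  have he : Function.Bijective fun u => (f (a₀, u)).2 := by
    refine ⟨fun u u' huu' => ?_, fun v => ⟨(f.symm (a₀, v)).2, ?_⟩⟩
    · exact congrArg Prod.snd (f.injective (Prod.ext (hfst (a₀, u) (a₀, u') rfl) huu'))
    · exact (hsnd (a₀, (f.symm (a₀, v)).2) (f.symm (a₀, v)) rfl).trans
        (by rw [f.apply_symm_apply])
  exact ⟨.ofBijective _ hg, .ofBijective _ he,
    Equiv.ext fun p => Prod.ext (hfst _ p rfl) (hsnd _ p rfl)⟩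

section ProdPerm

variable {α β : Type*}

def prodPerm (S : Subgroup (Perm α)) (T : Subgroup (Perm β)) : Subgroup (Perm (α × β)) :=
  (S.prod T).map (prodPermHom α β)

theorem prodPermHom_injective [Nonempty α] [Nonempty β] :
    Function.Injective (prodPermHom α β) := by
  obtain ⟨a₀⟩ := ‹Nonempty α›
  obtain ⟨b₀⟩ := ‹Nonempty β›
  intro p q hpq
  refine Prod.ext (Equiv.ext fun a => ?_) (Equiv.ext fun b => ?_)
  · exact congrArg Prod.fst (DFunLike.congr_fun hpq (a, b₀))
  · exact congrArg Prod.snd (DFunLike.congr_fun hpq (a₀, b))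

variable {S S' : Subgroup (Perm α)} {T T' : Subgroup (Perm β)}

theorem mem_prodPerm {f : Perm (α × β)} :
    f ∈ prodPerm S T ↔ ∃ k ∈ S, ∃ l ∈ T, prodPermHom α β (k, l) = f := by
  simp [prodPerm, Subgroup.mem_prod, and_assoc]

theorem prodPermHom_mem_prodPerm [Nonempty α] [Nonempty β] {k : Perm α} {l : Perm β} :
    prodPermHom α β (k, l) ∈ prodPerm S T ↔ k ∈ S ∧ l ∈ T :=
  Subgroup.mem_map_iff_mem prodPermHom_injective

theorem prodPerm_mono (hS : S ≤ S') (hT : T ≤ T') : prodPerm S T ≤ prodPerm S' T' :=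
  Subgroup.map_mono (Subgroup.prod_mono hS hT)

theorem le_of_prodPerm_le [Nonempty α] [Nonempty β] (h : prodPerm S T ≤ prodPerm S' T') :
    S ≤ S' := fun _ hk =>
  (prodPermHom_mem_prodPerm.mp (h (prodPermHom_mem_prodPerm.mpr ⟨hk, one_mem T⟩))).1

theorem eq_of_prodPerm_eq [Nonempty α] [Nonempty β] (h : prodPerm S T = prodPerm S' T') :
    S = S' :=
  le_antisymm (le_of_prodPerm_le h.le) (le_of_prodPerm_le h.ge)

theorem map_conj_prodPerm (k : Perm α) (l : Perm β) :
    (prodPerm S T).map (MulAut.conj (prodPermHom α β (k, l))).toMonoidHom =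
      prodPerm (S.map (MulAut.conj k).toMonoidHom) (T.map (MulAut.conj l).toMonoidHom) := by
  have hconj : ∀ ρ m, MulAut.conj (prodPermHom α β (k, l)) (prodPermHom α β (ρ, m)) =
      prodPermHom α β (MulAut.conj k ρ, MulAut.conj l m) := fun ρ m => by
    simp only [MulAut.conj_apply, ← map_mul, ← map_inv]
    rfl
  ext f
  simp only [Subgroup.mem_map, mem_prodPerm]
  constructor
  · rintro ⟨_, ⟨ρ, hρ, m, hm, rfl⟩, rfl⟩
    exact ⟨_, ⟨ρ, hρ, rfl⟩, _, ⟨m, hm, rfl⟩, (hconj ρ m).symm⟩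
  · rintro ⟨_, ⟨ρ, hρ, rfl⟩, _, ⟨m, hm, rfl⟩, rfl⟩
    exact ⟨_, ⟨ρ, hρ, m, hm, rfl⟩, hconj ρ m⟩

theorem le_twoClosure (K : Subgroup (Perm α)) : K ≤ twoClosure K :=
  fun f hf _ _ => ⟨f, hf, rfl, rfl⟩

theorem twoClosure_prodPerm_le [Nonempty α] [Nonempty β] :
    twoClosure (prodPerm S T) ≤ prodPerm (twoClosure S) (twoClosure T) := by
  intro f hf
  have hpair : ∀ p q, ∃ k ∈ S, ∃ l ∈ T, f p = (k p.1, l p.2) ∧ f q = (k q.1, l q.2) := by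
    intro p q
    obtain ⟨w, hw, hp, hq⟩ := hf p q
    obtain ⟨k, hk, l, hl, rfl⟩ := mem_prodPerm.mp hw
    exact ⟨k, hk, l, hl, hp, hq⟩
  obtain ⟨g, e, rfl⟩ := Perm.exists_prodCongr_eq (f := f)
    (fun p q hpq => by obtain ⟨_, -, _, -, hp, hq⟩ := hpair p q; rw [hp, hq, hpq])
    (fun p q hpq => by obtain ⟨_, -, _, -, hp, hq⟩ := hpair p q; rw [hp, hq, hpq])
  obtain ⟨a₀⟩ := ‹Nonempty α›
  obtain ⟨b₀⟩ := ‹Nonempty β›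
  refine prodPermHom_mem_prodPerm.mpr ⟨fun x y => ?_, fun u v => ?_⟩
  · obtain ⟨k, hk, _, -, hx, hy⟩ := hpair (x, b₀) (y, b₀)
    exact ⟨k, hk, congrArg Prod.fst hx, congrArg Prod.fst hy⟩
  · obtain ⟨_, -, l, hl, hu, hv⟩ := hpair (a₀, u) (a₀, v)
    exact ⟨l, hl, congrArg Prod.snd hu, congrArg Prod.snd hv⟩

theorem twoClosure_prodPerm [Nonempty α] [Nonempty β] (hS : twoClosure S = S)
    (hT : twoClosure T = T) : twoClosure (prodPerm S T) = prodPerm S T :=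
  le_antisymm (twoClosure_prodPerm_le.trans_eq (by rw [hS, hT])) (le_twoClosure _)

theorem IsRegularPermSubgroup.prodPerm (hS : IsRegularPermSubgroup S)
    (hT : IsRegularPermSubgroup T) : IsRegularPermSubgroup (prodPerm S T) := by
  rintro ⟨x, u⟩ ⟨y, v⟩
  obtain ⟨⟨k, hk⟩, hkx, hk_uniq⟩ := hS x y
  obtain ⟨⟨l, hl⟩, hlu, hl_uniq⟩ := hT u v
  refine ⟨⟨prodPermHom α β (k, l), mem_prodPerm.mpr ⟨k, hk, l, hl, rfl⟩⟩, ?_, ?_⟩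
  · exact Prod.ext hkx hlu
  · rintro ⟨w, hw⟩ hwx
    obtain ⟨k', hk', l', hl', rfl⟩ := mem_prodPerm.mp hw
    have hk' : k' = k := congrArg Subtype.val (hk_uniq ⟨k', hk'⟩ (congrArg Prod.fst hwx))
    have hl' : l' = l := congrArg Subtype.val (hl_uniq ⟨l', hl'⟩ (congrArg Prod.snd hwx))
    simp only [hk', hl']

end ProdPerm

section Groups

variable {G H : Type*} [Group G] [Group H]

theorem mem_rightReg_iff {f : Perm G} : f ∈ rightReg G ↔ ∃ a : G, ∀ x, f x = x * a := by
  constructor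
  · rintro ⟨g, rfl⟩
    exact ⟨g⁻¹, fun x => rfl⟩
  · rintro ⟨a, ha⟩
    exact ⟨a⁻¹, Equiv.ext fun x => by simp [rightRegHom, ha x]⟩

theorem rightRegHom_injective : Function.Injective (rightRegHom G) := fun a b hab => by
  simpa [rightRegHom] using DFunLike.congr_fun hab 1

theorem rightReg_regular : IsRegularPermSubgroup (rightReg G) := by
  intro x y
  refine ⟨⟨rightRegHom G (y⁻¹ * x), ⟨_, rfl⟩⟩, by simp [rightRegHom], ?_⟩
  rintro ⟨r, hr⟩ hrx
  obtain ⟨a, ha⟩ := mem_rightReg_iff.mp hr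
  have ha' : a = x⁻¹ * y := by rw [← (ha x).symm.trans hrx]; group
  exact Subtype.ext (Equiv.ext fun z => by simp [rightRegHom, ha z, ha', mul_assoc])

theorem isGRegular_rightReg : IsGRegular G (rightReg G) :=
  ⟨rightReg_regular, ⟨(MonoidHom.ofInjective rightRegHom_injective).symm⟩⟩

theorem IsGRegular.prodPerm {R : Subgroup (Perm G)} {T : Subgroup (Perm H)}
    (hR : IsGRegular G R) (hT : IsGRegular H T) : IsGRegular (G × H) (prodPerm R T) :=
  ⟨hR.1.prodPerm hT.1, ⟨(Subgroup.equivMapOfInjective _ _ prodPermHom_injective).symm.trans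
    ((Subgroup.prodEquiv R T).trans (hR.2.some.prodCongr hT.2.some))⟩⟩

theorem rightReg_prod : rightReg (G × H) = prodPerm (rightReg G) (rightReg H) := by
  rw [rightReg, rightReg, rightReg, prodPerm, ← MonoidHom.range_prodMap, ← MonoidHom.range_comp]
  rfl

theorem twoClosure_rightReg : twoClosure (rightReg G) = rightReg G := by
  refine le_antisymm (fun f hf => mem_rightReg_iff.mpr ⟨f 1, fun x => ?_⟩) (le_twoClosure _)
  obtain ⟨k, hk, hx, h1⟩ := hf x 1
  obtain ⟨a, ha⟩ := mem_rightReg_iff.mp hk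
  rw [hx, h1, ha x, ha 1, one_mul]

theorem rightReg_le_hol : rightReg G ≤ hol G := fun f hf => by
  obtain ⟨a, ha⟩ := mem_rightReg_iff.mp hf
  exact ⟨1, a, ha⟩

theorem prodPerm_hol_le_hol : prodPerm (hol G) (hol H) ≤ hol (G × H) := by
  intro f hf
  obtain ⟨k, ⟨σ, a, hk⟩, l, ⟨τ, b, hl⟩, rfl⟩ := mem_prodPerm.mp hf
  exact ⟨σ.prodCongr τ, (a, b), fun p => Prod.ext (hk p.1) (hl p.2)⟩

theorem IsTransjugate.of_prodPerm_rightReg {K : Subgroup (Perm G)}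
    (hK : IsTransjugate (G × H) (prodPerm K (rightReg H))) : IsTransjugate G K := by
  intro R hRK hR
  obtain ⟨k', hk', hconj⟩ := hK (prodPerm R (rightReg H)) (prodPerm_mono hRK le_rfl)
    (hR.prodPerm isGRegular_rightReg)
  obtain ⟨k, hk, l, -, rfl⟩ := mem_prodPerm.mp hk'
  rw [map_conj_prodPerm, rightReg_prod] at hconj
  exact ⟨k, hk, eq_of_prodPerm_eq hconj⟩

end Groups

theorem prodnonci_general {G H : Type*} [Group G] [Group H]
    (h : ¬ IsNCI2 G) : ¬ IsNCI2 (G × H) := by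
  refine fun hGH => h fun K hGK hKhol hK2 => ?_
  refine (hGH (prodPerm K (rightReg H)) ?_ ?_ ?_).of_prodPerm_rightReg
  · exact rightReg_prod.trans_le (prodPerm_mono hGK le_rfl)
  · exact (prodPerm_mono hKhol rightReg_le_hol).trans prodPerm_hol_le_hol
  · exact twoClosure_prodPerm hK2 twoClosure_rightReg

/-- If a finite group `G` is not an `NCI⁽²⁾`-group and `H`
is any finite group, then `G × H` is not an `NCI⁽²⁾`-group. -/
theorem prodnonci {G H : Type*} [Group G] [Group H] [Fintype G] [Fintype H]
    (h : ¬ IsNCI2 G) : ¬ IsNCI2 (G × H) :=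
  prodnonci_general h
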